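/- arXiv:1302.3327 — 5 statements merged into one kernel-verified Lean document; each statement's English description precedes it below -/
import Mathlib

section
/- Let S be a unique factorization domain and f ∈ S an irreducible element. Then any two nonzero S-submodules M, N of the module S_f/S (the localization of S at f modulo S) have nonzero intersection. -/
/-!
Every element of `S_f/S` is killed by a power of `f`, so a nonzero submodule `M` contains a
nonzero element killed by `f` itself. Such an element is `[a/f]` with `f ∤ a`. If `[a/f] ∈ M`
and `[b/f] ∈ N`, then `[ab/f] = b • [a/f] = a • [b/f]` lies in `M ⊓ N`, and it is nonzero
because `f` is prime and divides neither `a` nor `b`.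
-/

/-- The `R`-module `R_f / R`. -/
noncomputable abbrev QuotMod {R : Type*} [CommRing R] (f : R) :=
  (Localization.Away f) ⧸ (LinearMap.range (Algebra.linearMap R (Localization.Away f)))

/-- The `R`-linear map `R → R_f/R`, `a ↦ [a/f]`. -/
noncomputable def iota {R : Type*} [CommRing R] (f : R) : R →ₗ[R] QuotMod f :=
  (Submodule.mkQ _).comp
    (((LinearMap.mul R (Localization.Away f)) (IsLocalization.Away.invSelf f)).comp
      (Algebra.linearMap R (Localization.Away f)))

theorem exists_pow_smul_ne_zero_and_smul_eq_zero {R M : Type*} [Monoid R] [Zero M]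
    [MulAction R M] {f : R} {x : M} (hx : x ≠ 0) {n : ℕ} (hn : f ^ n • x = 0) :
    ∃ k, f ^ k • x ≠ 0 ∧ f • f ^ k • x = 0 := by
  induction n generalizing x with
  | zero => exact absurd (by simpa using hn) hx
  | succ n ih =>
    by_cases hfx : f • x = 0
    · exact ⟨0, by simpa using hx, by simpa using hfx⟩
    · rw [pow_succ, mul_smul] at hn
      obtain ⟨k, hk, hfk⟩ := ih hfx hn
      exact ⟨k + 1, by rwa [pow_succ, mul_smul], by rwa [pow_succ, mul_smul]⟩

namespace QuotMod

variable {R : Type*} [CommRing R] (f : R)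

local notation "invSelf" => IsLocalization.Away.invSelf (S := Localization.Away f) f

theorem iota_apply (c : R) :
    iota f c = Submodule.Quotient.mk (invSelf * algebraMap R _ c) := rfl

theorem exists_pow_smul_eq_zero (x : QuotMod f) : ∃ n : ℕ, f ^ n • x = 0 := by
  obtain ⟨y, rfl⟩ := Submodule.Quotient.mk_surjective _ x
  obtain ⟨⟨a, ⟨_, n, rfl⟩⟩, h⟩ := IsLocalization.surj (Submonoid.powers f) y
  refine ⟨n, ?_⟩
  rw [← Submodule.Quotient.mk_smul, Submodule.Quotient.mk_eq_zero, Algebra.smul_def, mul_comm]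
  exact ⟨a, h.symm⟩

theorem exists_iota_eq_of_smul_eq_zero {z : QuotMod f} (hz : f • z = 0) :
    ∃ c, iota f c = z := by
  obtain ⟨y, rfl⟩ := Submodule.Quotient.mk_surjective _ z
  rw [← Submodule.Quotient.mk_smul, Submodule.Quotient.mk_eq_zero] at hz
  obtain ⟨c, hc⟩ := hz
  refine ⟨c, ?_⟩
  rw [Algebra.linearMap_apply] at hc
  rw [iota_apply, hc, Algebra.smul_def, ← mul_assoc, mul_comm invSelf,
    IsLocalization.Away.mul_invSelf, one_mul]

theorem iota_eq_zero_iff [IsDomain R] (hf : f ≠ 0) (c : R) : iota f c = 0 ↔ f ∣ c := by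
  have hinj : Function.Injective (algebraMap R (Localization.Away f)) :=
    IsLocalization.injective _ (powers_le_nonZeroDivisors_of_noZeroDivisors hf)
  have hcancel (s : R) : invSelf * algebraMap R _ (f * s) = algebraMap R _ s := by
    rw [map_mul, ← mul_assoc, mul_comm invSelf, IsLocalization.Away.mul_invSelf, one_mul]
  rw [iota_apply, Submodule.Quotient.mk_eq_zero]
  constructor
  · rintro ⟨s, hs⟩
    refine ⟨s, hinj ?_⟩
    rw [Algebra.linearMap_apply, ← hcancel s] at hs
    have hunit : IsUnit invSelf := .of_mul_eq_one_right _ (IsLocalization.Away.mul_invSelf f)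
    exact (hunit.mul_left_cancel hs).symm
  · rintro ⟨s, rfl⟩
    exact ⟨s, (hcancel s).symm⟩

theorem exists_iota_mem_of_ne_bot [IsDomain R] (hf : f ≠ 0) {M : Submodule R (QuotMod f)}
    (hM : M ≠ ⊥) : ∃ a, ¬ f ∣ a ∧ iota f a ∈ M := by
  obtain ⟨x, hxM, hx⟩ := Submodule.exists_mem_ne_zero_of_ne_bot hM
  obtain ⟨n, hn⟩ := exists_pow_smul_eq_zero f x
  obtain ⟨k, hk, hfk⟩ := exists_pow_smul_ne_zero_and_smul_eq_zero hx hn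
  obtain ⟨c, hc⟩ := exists_iota_eq_of_smul_eq_zero f hfk
  exact ⟨c, fun hfc => hk (hc ▸ (iota_eq_zero_iff f hf c).2 hfc), hc ▸ M.smul_mem _ hxM⟩

theorem inf_ne_bot_of_prime [IsDomain R] (hf : Prime f) {M N : Submodule R (QuotMod f)}
    (hM : M ≠ ⊥) (hN : N ≠ ⊥) : M ⊓ N ≠ ⊥ := by
  obtain ⟨a, ha, haM⟩ := exists_iota_mem_of_ne_bot f hf.ne_zero hM
  obtain ⟨b, hb, hbN⟩ := exists_iota_mem_of_ne_bot f hf.ne_zero hN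
  have hab : iota f (a * b) ∈ M ⊓ N := by
    refine ⟨?_, ?_⟩
    · rw [mul_comm, ← smul_eq_mul, map_smul]
      exact M.smul_mem b haM
    · rw [← smul_eq_mul, map_smul]
      exact N.smul_mem a hbN
  intro hbot
  rw [hbot, Submodule.mem_bot, iota_eq_zero_iff f hf.ne_zero] at hab
  exact (hf.dvd_or_dvd hab).elim ha hb

end QuotMod

/-- Any two nonzero submodules of `S_f/S` over a UFD `S` with `f` irreducible
have nonzero intersection. -/
theorem stmt0 {S : Type*} [CommRing S] [IsDomain S] [UniqueFactorizationMonoid S]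
    (f : S) (hf : Irreducible f)
    (M N : Submodule S (QuotMod f)) (hM : M ≠ ⊥) (hN : N ≠ ⊥) :
    M ⊓ N ≠ ⊥ :=
  QuotMod.inf_ne_bot_of_prime f hf.prime hM hN
end

section
/- Let R be a Noetherian regular domain of prime characteristic p with flat Frobenius, f ∈ R nonzero, and r, e positive integers. If I ⊆ R is a nonzero ideal with I ⊆ (I^{[p^e]} : f^r), then f belongs to the radical of I. -/
/-- The `q`-th Frobenius power `I^{[q]}` of an ideal: the ideal generated by `q`-th powers
of elements of `I`. -/
def frobPow {R : Type*} [CommRing R] (I : Ideal R) (q : ℕ) : Ideal R :=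
  Ideal.span ((fun x => x ^ q) '' (I : Set R))

/-!
If `f` avoided a prime `P ⊇ I`, then `f^r I ⊆ I^{[q]} ⊆ I^q ⊆ P I` with `q = p^e ≥ 2`. After
localizing at `P`, where `f` is a unit, this says `I_P ⊆ P_P I_P`, so `I_P = 0` by Nakayama, and
hence `I = 0` because `R` is a domain.
-/

lemma frobPow_le_pow {R : Type*} [CommRing R] (I : Ideal R) (q : ℕ) : frobPow I q ≤ I ^ q := by
  rw [frobPow, Ideal.span_le]
  rintro _ ⟨x, hx, rfl⟩
  exact Ideal.pow_mem_pow hx q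

theorem Ideal.eq_bot_of_mul_mem_prime_mul {R : Type*} [CommRing R] [IsDomain R]
    [IsNoetherianRing R] {I P : Ideal R} [P.IsPrime] {s : R} (hs : s ∉ P)
    (h : ∀ x ∈ I, s * x ∈ P * I) : I = ⊥ := by
  let Rₚ := Localization.AtPrime P
  let J := I.map (algebraMap R Rₚ)
  have hs_unit : IsUnit (algebraMap R Rₚ s) :=
    IsLocalization.map_units Rₚ (⟨s, hs⟩ : P.primeCompl)
  have hJ : J ≤ IsLocalRing.maximalIdeal Rₚ • J := by
    refine Ideal.map_le_of_le_comap fun x hx => ?_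
    have hsx := Ideal.mem_map_of_mem (algebraMap R Rₚ) (h x hx)
    rw [Ideal.map_mul, Localization.AtPrime.map_eq_maximalIdeal, map_mul] at hsx
    exact (Ideal.unit_mul_mem_iff_mem _ hs_unit).mp hsx
  have hJ_bot : J = ⊥ :=
    Submodule.eq_bot_of_le_smul_of_le_jacobson_bot _ J (IsNoetherian.noetherian J) hJ
      (IsLocalRing.maximalIdeal_le_jacobson ⊥)
  exact (Ideal.map_eq_bot_iff_of_injective
    (IsLocalization.injective Rₚ P.primeCompl_le_nonZeroDivisors)).mp hJ_bot

theorem stmt2_general {R : Type*} [CommRing R] [IsDomain R] [IsNoetherianRing R]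
    (p : ℕ) [Fact p.Prime]
    (f : R) (r e : ℕ) (he : 0 < e)
    (I : Ideal R) (hI : I ≠ ⊥)
    (h : I ≤ (frobPow I (p ^ e)).colon (Ideal.span {f ^ r})) :
    f ∈ I.radical := by
  by_contra hf_rad
  obtain ⟨P, hIP, hP, hfP⟩ : ∃ P : Ideal R, I ≤ P ∧ P.IsPrime ∧ f ∉ P := by
    simpa [Ideal.radical_eq_sInf, Ideal.mem_sInf] using hf_rad
  have hq : 2 ≤ p ^ e := (Fact.out : p.Prime).two_le.trans (Nat.le_self_pow he.ne' p)
  refine hI (Ideal.eq_bot_of_mul_mem_prime_mul (s := f ^ r)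
    (fun hfr => hfP (hP.mem_of_pow_mem r hfr)) fun x hx => ?_)
  have hfx : f ^ r * x ∈ frobPow I (p ^ e) := by
    rw [mul_comm]
    exact Ideal.mem_colon_span_singleton.mp (h hx)
  have hIq : I ^ p ^ e ≤ P * I :=
    calc I ^ p ^ e ≤ I ^ 2 := Ideal.pow_le_pow_right hq
      _ = I * I := pow_two I
      _ ≤ P * I := Ideal.mul_mono_left hIP
  exact hIq (frobPow_le_pow I _ hfx)

/-- In a Noetherian regular domain of characteristic `p` with flat Frobenius, if a nonzero
ideal `I` satisfies `I ⊆ (I^{[p^e]} : f^r)`, then `f` is in the radical of `I`. -/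
theorem stmt2 {R : Type*} [CommRing R] [IsDomain R] [IsNoetherianRing R]
    (p : ℕ) [Fact p.Prime] [CharP R p] [ExpChar R p]
    (hflat : @Module.Flat R R _ _ (Module.compHom R (frobenius R p)))
    (f : R) (hf : f ≠ 0) (r e : ℕ) (hr : 0 < r) (he : 0 < e)
    (I : Ideal R) (hI : I ≠ ⊥)
    (h : I ≤ (frobPow I (p ^ e)).colon (Ideal.span {f ^ r})) :
    f ∈ I.radical :=
  stmt2_general p f r e he I hI h
end

section
/- Let R be a regular F-finite ring of characteristic p, f ∈ R, and α = r/(p^e − 1) with r a positive integer. Define the F-flag of ideals by I^1 = τ(f^α) and I^{j+1} = ((I^j)^{[p^e]} : f^r). Then I^j ⊆ I^{j+1} and f^r I^{j+1} ⊆ (I^j)^{[p^e]} for every j ≥ 1. -/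
/-- `I^{[1/q]}`: the smallest ideal `J` with `I ⊆ J^{[q]}` (in a regular ring). -/
noncomputable def frobRoot {R : Type*} [CommRing R] (I : Ideal R) (q : ℕ) : Ideal R :=
  sInf {J : Ideal R | I ≤ frobPow J q}

/-- The generalized test ideal `τ(f^c) = ⋃_e (f^{⌈c p^e⌉})^{[1/p^e]}`. -/
noncomputable def testIdeal {R : Type*} [CommRing R] (p : ℕ) (f : R) (c : ℝ) : Ideal R :=
  ⨆ e : ℕ, frobRoot (Ideal.span {f ^ (⌈c * (p : ℝ) ^ e⌉₊)}) (p ^ e)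
/-- The `F`-flag of ideals associated to `f` and `c`: `I^1 = τ(f^c)`,
`I^{j+1} = ((I^j)^{[p^e]} : f^r)`.  (The value at `0` is junk.) -/
noncomputable def Fflag {R : Type*} [CommRing R] (p e r : ℕ) (f : R) (c : ℝ) : ℕ → Ideal R
  | 0 => ⊤
  | 1 => testIdeal p f c
  | (j + 2) => (frobPow (Fflag p e r f c (j + 1)) (p ^ e)).colon (Ideal.span {f ^ r})

/-!
Frobenius is flat and finite, hence so are its iterates `F^n`. Extension of ideals along a flat
ring map commutes with colons by an element, and along a finite flat map over a Noetherian ring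
also with arbitrary intersections (a finitely presented flat module is a retract of a finite free
one). The first gives `(J^{[q]} : y^q) ⊆ (J : y)^{[q]}`, the second `I ⊆ (I^{[1/q]})^{[q]}`.
Since `⌈α p^{m+e}⌉ = ⌈α p^m⌉ + r p^m`, these yield `f^r τ(f^α) ⊆ τ(f^α)^{[p^e]}`, that is
`I^1 ⊆ I^2`; applying the monotone operation `J ↦ (J^{[p^e]} : f^r)` propagates the inclusion
along the flag.
-/

theorem Finsupp.mem_ideal_smul_top_iff {R ι : Type*} [CommRing R] {I : Ideal R} {v : ι →₀ R} :
    v ∈ I • (⊤ : Submodule R (ι →₀ R)) ↔ ∀ i, v i ∈ I := by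
  classical
  refine ⟨fun hv => ?_, fun hv => ?_⟩
  · refine Submodule.smul_induction_on hv (fun a ha t _ i => ?_) fun _ _ hs ht i => ?_
    · simpa using I.mul_mem_right (t i) ha
    · simpa using I.add_mem (hs i) (ht i)
  · rw [← v.sum_single]
    refine Submodule.sum_mem _ fun i _ => ?_
    rw [← mul_one (v i), ← smul_eq_mul, ← Finsupp.smul_single]
    exact Submodule.smul_mem_smul (hv i) trivial

theorem Module.Flat.sInf_smul_top {R M : Type*} [CommRing R] [AddCommGroup M] [Module R M]
    [Module.Flat R M] [Module.FinitePresentation R M] (𝒮 : Set (Ideal R)) :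
    sInf 𝒮 • (⊤ : Submodule R M) = ⨅ J ∈ 𝒮, J • ⊤ := by
  refine le_antisymm (le_iInf₂ fun J hJ => Submodule.smul_mono_left (sInf_le hJ)) fun x hx => ?_
  simp only [Submodule.mem_iInf] at hx
  obtain ⟨k, σ, π, hπσ⟩ := exists_factorization_of_finitePresentation (LinearMap.id : M →ₗ[R] M)
  have hσx : σ x ∈ sInf 𝒮 • (⊤ : Submodule R (Fin k →₀ R)) :=
    Finsupp.mem_ideal_smul_top_iff.mpr fun i => Submodule.mem_sInf.mpr fun J hJ =>
      Finsupp.mem_ideal_smul_top_iff.mp (Submodule.smul_top_le_comap_smul_top J σ (hx J hJ)) i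
  have hπσx : π (σ x) = x := by simp [← LinearMap.comp_apply, ← hπσ]
  simpa [hπσx] using Submodule.smul_top_le_comap_smul_top _ π hσx

namespace RingHom.Flat

variable {R S : Type*} [CommRing R] [CommRing S] {φ : R →+* S}

theorem colon_map_le (hφ : φ.Flat) (J : Ideal R) (y : R) :
    (J.map φ).colon (Ideal.span {φ y}) ≤ (J.colon (Ideal.span {y})).map φ := by
  let := φ.toAlgebra
  have : Module.Flat R S := hφ
  intro z hz
  rw [Ideal.mem_colon_span_singleton] at hz
  obtain ⟨n, c, g, hg⟩ := Submodule.mem_span_set'.mp hz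
  choose a ha hφa using fun i => (g i).2
  have hsum : ∑ i, φ (a i) * c i = φ y * z := by
    rw [mul_comm, ← hg]
    exact Finset.sum_congr rfl fun i _ => by rw [hφa, smul_eq_mul, mul_comm]
  -- `y • z - ∑ aᵢ • cᵢ = 0` is a relation in the flat `R`-module `S`, hence a trivial one
  have hrel : ∑ o : Option (Fin n), o.elim y (fun i => -a i) • o.elim z c = 0 := by
    rw [Fintype.sum_option]
    simp only [Option.elim_none, Option.elim_some, RingHom.smul_toAlgebra, map_neg, neg_mul,
      Finset.sum_neg_distrib, hsum, add_neg_cancel]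
  obtain ⟨k, A, Y, hY, hA⟩ :=
    Module.Flat.isTrivialRelation_of_sum_smul_eq_zero (R := R) (M := S) hrel
  have hAJ (j : Fin k) : A none j ∈ J.colon (Ideal.span {y}) := by
    have h := hA j
    rw [Fintype.sum_option] at h
    simp only [Option.elim_none, Option.elim_some, neg_mul, Finset.sum_neg_distrib,
      add_neg_eq_zero] at h
    rw [Ideal.mem_colon_span_singleton, mul_comm, h]
    exact J.sum_mem fun i _ => J.mul_mem_right _ (ha i)
  rw [show z = _ from hY none]
  exact Ideal.sum_mem _ fun j _ => by
    simpa only [RingHom.smul_toAlgebra] using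
      Ideal.mul_mem_right _ _ (Ideal.mem_map_of_mem φ (hAJ j))

theorem map_sInf [IsNoetherianRing R] (hφ : φ.Flat) (hfin : φ.Finite) (𝒮 : Set (Ideal R)) :
    (sInf 𝒮).map φ = ⨅ J ∈ 𝒮, J.map φ := by
  let := φ.toAlgebra
  have : Module.Flat R S := hφ
  have : Module.Finite R S := hfin
  have : Module.FinitePresentation R S := Module.finitePresentation_of_finite R S
  refine le_antisymm (le_iInf₂ fun J hJ => Ideal.map_mono (sInf_le hJ)) fun x hx => ?_
  have h := (Module.Flat.sInf_smul_top (M := S) 𝒮).ge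
  simp only [Ideal.smul_top_eq_map, RingHom.algebraMap_toAlgebra] at h
  exact h (by simpa using hx)

end RingHom.Flat

section Frobenius

variable {R : Type*} [CommRing R] (p : ℕ) [ExpChar R p]

theorem flat_iterateFrobenius (hflat : (frobenius R p).Flat) (n : ℕ) :
    (iterateFrobenius R p n).Flat := by
  induction n with
  | zero => simpa [iterateFrobenius_zero] using RingHom.Flat.id R
  | succ n ih => simpa [iterateFrobenius_add, iterateFrobenius_one] using hflat.comp ih

theorem finite_iterateFrobenius (hfin : (frobenius R p).Finite) (n : ℕ) :
    (iterateFrobenius R p n).Finite := by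
  induction n with
  | zero => simpa [iterateFrobenius_zero] using RingHom.Finite.id R
  | succ n ih => simpa [iterateFrobenius_add, iterateFrobenius_one] using ih.comp hfin

theorem frobPow_eq_map (I : Ideal R) (n : ℕ) :
    frobPow I (p ^ n) = I.map (iterateFrobenius R p n) := rfl

theorem frobPow_mono {I J : Ideal R} (h : I ≤ J) (q : ℕ) : frobPow I q ≤ frobPow J q :=
  Ideal.span_mono (Set.image_mono h)

theorem frobPow_frobPow (I : Ideal R) (a b : ℕ) :
    frobPow (frobPow I (p ^ a)) (p ^ b) = frobPow I (p ^ (a + b)) := by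
  rw [frobPow_eq_map, frobPow_eq_map, frobPow_eq_map, Ideal.map_map, add_comm a b,
    iterateFrobenius_add]

theorem le_frobPow_frobRoot [IsNoetherianRing R] (hflat : (frobenius R p).Flat)
    (hfin : (frobenius R p).Finite) (I : Ideal R) (n : ℕ) :
    I ≤ frobPow (frobRoot I (p ^ n)) (p ^ n) := by
  rw [frobPow_eq_map, frobRoot,
    (flat_iterateFrobenius p hflat n).map_sInf (finite_iterateFrobenius p hfin n)]
  exact le_iInf₂ fun _ hJ => hJ

theorem colon_frobPow_le (hflat : (frobenius R p).Flat) (J : Ideal R) (y : R) (n : ℕ) :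
    (frobPow J (p ^ n)).colon (Ideal.span {y ^ p ^ n}) ≤
      frobPow (J.colon (Ideal.span {y})) (p ^ n) :=
  (flat_iterateFrobenius p hflat n).colon_map_le J y

end Frobenius

theorem natCeil_mul_pow_add {α : ℝ} {p r e : ℕ} (hα0 : 0 ≤ α)
    (hα : α * ((p : ℝ) ^ e - 1) = r) (m : ℕ) :
    ⌈α * (p : ℝ) ^ (m + e)⌉₊ = ⌈α * (p : ℝ) ^ m⌉₊ + r * p ^ m := by
  have h : α * (p : ℝ) ^ (m + e) = α * (p : ℝ) ^ m + ((r * p ^ m : ℕ) : ℝ) := by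
    push_cast
    linear_combination (p : ℝ) ^ m * hα
  rw [h, Nat.ceil_add_natCast (by positivity)]

theorem testIdeal_le_colon {R : Type*} [CommRing R] [IsNoetherianRing R] (p : ℕ) [ExpChar R p]
    (hflat : (frobenius R p).Flat) (hfin : (frobenius R p).Finite) (f : R) {r e : ℕ} {α : ℝ}
    (hα0 : 0 ≤ α) (hα : α * ((p : ℝ) ^ e - 1) = r) :
    testIdeal p f α ≤ (frobPow (testIdeal p f α) (p ^ e)).colon (Ideal.span {f ^ r}) := by
  refine iSup_le fun m => sInf_le ?_
  rw [Set.mem_ofPred_eq, Ideal.span_le, Set.singleton_subset_iff]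
  refine colon_frobPow_le p hflat _ _ m (Ideal.mem_colon_span_singleton.mpr ?_)
  rw [← pow_mul, ← pow_add, ← natCeil_mul_pow_add hα0 hα, frobPow_frobPow, add_comm e]
  exact frobPow_mono (le_iSup (fun n => frobRoot (Ideal.span {f ^ ⌈α * (p : ℝ) ^ n⌉₊}) (p ^ n))
    (m + e)) _ (le_frobPow_frobRoot p hflat hfin _ _ (Ideal.mem_span_singleton_self _))

theorem Fflag_succ_le_of_one_le_two {R : Type*} [CommRing R] {p e r : ℕ} {f : R} {c : ℝ}
    (h : Fflag p e r f c 1 ≤ Fflag p e r f c 2) (j : ℕ) :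
    Fflag p e r f c (j + 1) ≤ Fflag p e r f c (j + 2) := by
  induction j with
  | zero => exact h
  | succ j ih => exact Submodule.colon_mono (frobPow_mono ih _) subset_rfl

theorem stmt5_general {R : Type*} [CommRing R] [IsNoetherianRing R]
    (p : ℕ) [Fact p.Prime] [ExpChar R p]
    (hflat : @Module.Flat R R _ _ (Module.compHom R (frobenius R p)))
    (hFfin : @Module.Finite R R _ _ (Module.compHom R (frobenius R p)))
    (f : R) (r e : ℕ) (he : 0 < e)
    (α : ℝ) (hα : α = (r : ℝ) / ((p : ℝ) ^ e - 1)) :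
    ∀ j : ℕ, 1 ≤ j →
      Fflag p e r f α j ≤ Fflag p e r f α (j + 1) ∧
      ∀ x ∈ Fflag p e r f α (j + 1), f ^ r * x ∈ frobPow (Fflag p e r f α j) (p ^ e) := by
  have hq : 0 < (p : ℝ) ^ e - 1 :=
    sub_pos.mpr (one_lt_pow₀ (by exact_mod_cast (Fact.out : p.Prime).one_lt) he.ne')
  have hα0 : 0 ≤ α := hα ▸ by positivity
  have hαr : α * ((p : ℝ) ^ e - 1) = r := by rw [hα, div_mul_cancel₀ _ hq.ne']
  have hbase := testIdeal_le_colon p hflat hFfin f hα0 hαr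
  intro j hj
  obtain ⟨k, rfl⟩ := Nat.exists_eq_add_of_le' hj
  refine ⟨Fflag_succ_le_of_one_le_two hbase k, fun x hx => ?_⟩
  rw [mul_comm]
  exact Ideal.mem_colon_span_singleton.mp hx

/-- The `F`-flag of ideals of `f` and `α = r/(p^e − 1)` is increasing, and
`f^r I^{j+1} ⊆ (I^j)^{[p^e]}` for every `j ≥ 1`. -/
theorem stmt5 {R : Type*} [CommRing R] [IsDomain R] [IsNoetherianRing R]
    (p : ℕ) [Fact p.Prime] [CharP R p] [ExpChar R p]
    (hflat : @Module.Flat R R _ _ (Module.compHom R (frobenius R p)))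
    (hFfin : @Module.Finite R R _ _ (Module.compHom R (frobenius R p)))
    (f : R) (r e : ℕ) (hr : 0 < r) (he : 0 < e)
    (α : ℝ) (hα : α = (r : ℝ) / ((p : ℝ) ^ e - 1)) :
    ∀ j : ℕ, 1 ≤ j →
      Fflag p e r f α j ≤ Fflag p e r f α (j + 1) ∧
      ∀ x ∈ Fflag p e r f α (j + 1), f ^ r * x ∈ frobPow (Fflag p e r f α j) (p ^ e) :=
  stmt5_general p hflat hFfin f r e he α hα
end

section
/- Let R be a regular domain of characteristic p and f, g ∈ R relatively prime elements, and let A, B be ideals with (A^{[p]} : g^{p−1}) = A and (B^{[p]} : f^{p−1}) = B. Then (f^p A^{[p]} + g^p B^{[p]} : f^{p−1} g^{p−1}) = fA + gB. -/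
/-!
Write an element `h` of the colon ideal as `f^{p-1} g^{p-1} h = f^p v + g^p w` with
`v ∈ A^{[p]}`, `w ∈ B^{[p]}`. Since `f` and `g` are relatively prime, `g^{p-1} ∣ v` and
`f^{p-1} ∣ w`; cancelling `f^{p-1} g^{p-1}` gives `h = f v' + g w'` where `g^{p-1} v' = v` and
`f^{p-1} w' = w`, i.e. `v' ∈ (A^{[p]} : g^{p-1}) = A` and `w' ∈ (B^{[p]} : f^{p-1}) = B`.
-/

namespace Ideal

variable {R : Type*} [CommRing R]

theorem span_singleton_mul_colon_le (f g : R) (I : Ideal R) (n : ℕ) :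
    span {f} * I.colon (span {g ^ n}) ≤
      (span {f ^ (n + 1)} * I).colon (span {f ^ n * g ^ n}) := by
  rw [mul_le]
  intro r hr a ha
  obtain ⟨c, rfl⟩ := mem_span_singleton'.mp hr
  rw [mem_colon_span_singleton] at ha ⊢
  rw [show c * f * a * (f ^ n * g ^ n) = c * (f ^ (n + 1) * (a * g ^ n)) by ring]
  exact mul_mem_left _ _ (mem_span_singleton_mul.mpr ⟨_, ha, rfl⟩)

theorem span_singleton_mul_colon_zero_pow_eq_top (I : Ideal R) {g : R} (hg : IsUnit g) {n : ℕ}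
    (hn : n ≠ 0) :
    span {g} * I.colon (span {(0 : R) ^ n}) = ⊤ := by
  rw [zero_pow hn, colon_span, Submodule.colon_singleton_zero, mul_top,
    span_singleton_eq_top.mpr hg]

variable [DecompositionMonoid R] {f g : R}

theorem pow_dvd_of_pow_mul_eq_pow_succ_mul_add (hfg : IsRelPrime f g) {n : ℕ} {x v w : R}
    (hx : f ^ n * g ^ n * x = f ^ (n + 1) * v + g ^ (n + 1) * w) : g ^ n ∣ v := by
  refine (hfg.symm.pow (m := n) (n := n + 1)).dvd_of_dvd_mul_left ?_
  rw [show f ^ (n + 1) * v = g ^ n * (f ^ n * x - g * w) by linear_combination -hx]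
  exact dvd_mul_right _ _

variable [IsDomain R]

theorem mem_span_mul_colon_add_of_pow_mul_eq (hfg : IsRelPrime f g) {I J : Ideal R} {n : ℕ}
    {x v w : R} (hv : v ∈ I) (hw : w ∈ J)
    (hx : f ^ n * g ^ n * x = f ^ (n + 1) * v + g ^ (n + 1) * w) :
    x ∈ span {f} * I.colon (span {g ^ n}) + span {g} * J.colon (span {f ^ n}) := by
  by_cases h0 : f ^ n * g ^ n = 0
  · have hn : n ≠ 0 := by rintro rfl; simp at h0
    rcases mul_eq_zero.mp h0 with hf | hg
    · rw [pow_eq_zero_iff hn] at hf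
      subst hf
      rw [span_singleton_mul_colon_zero_pow_eq_top J (isRelPrime_zero_left.mp hfg) hn]
      exact Submodule.mem_sup_right Submodule.mem_top
    · rw [pow_eq_zero_iff hn] at hg
      subst hg
      rw [span_singleton_mul_colon_zero_pow_eq_top I (isRelPrime_zero_right.mp hfg) hn]
      exact Submodule.mem_sup_left Submodule.mem_top
  obtain ⟨w', rfl⟩ := pow_dvd_of_pow_mul_eq_pow_succ_mul_add hfg.symm
    (by linear_combination hx : g ^ n * f ^ n * x = g ^ (n + 1) * w + f ^ (n + 1) * v)
  obtain ⟨v', rfl⟩ := pow_dvd_of_pow_mul_eq_pow_succ_mul_add hfg hx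
  have hx' : x = f * v' + g * w' := mul_left_cancel₀ h0 (by linear_combination hx)
  rw [hx']
  refine Submodule.add_mem_sup (mem_span_singleton_mul.mpr ⟨v', ?_, rfl⟩)
    (mem_span_singleton_mul.mpr ⟨w', ?_, rfl⟩)
  · rwa [mem_colon_span_singleton, mul_comm]
  · rwa [mem_colon_span_singleton, mul_comm]

theorem colon_span_pow_mul_add_eq (hfg : IsRelPrime f g) (I J : Ideal R) (n : ℕ) :
    (span {f ^ (n + 1)} * I + span {g ^ (n + 1)} * J).colon (span {f ^ n * g ^ n}) =
      span {f} * I.colon (span {g ^ n}) + span {g} * J.colon (span {f ^ n}) := by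
  apply le_antisymm
  · intro x hx
    rw [mem_colon_span_singleton] at hx
    obtain ⟨_, hv', _, hw', hvw⟩ := Submodule.mem_sup.mp hx
    obtain ⟨v, hv, rfl⟩ := mem_span_singleton_mul.mp hv'
    obtain ⟨w, hw, rfl⟩ := mem_span_singleton_mul.mp hw'
    exact mem_span_mul_colon_add_of_pow_mul_eq hfg hv hw (by linear_combination -hvw)
  · refine sup_le ((span_singleton_mul_colon_le f g I n).trans
      (Submodule.colon_mono le_sup_left le_rfl)) ?_
    rw [mul_comm (f ^ n)]
    exact (span_singleton_mul_colon_le g f J n).trans (Submodule.colon_mono le_sup_right le_rfl)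

end Ideal

theorem stmt14_general {R : Type*} [CommRing R] [IsDomain R] [UniqueFactorizationMonoid R]
    (p : ℕ) [Fact p.Prime]
    (f g : R) (hfg : IsRelPrime f g) (A B : Ideal R)
    (hA : (frobPow A p).colon (Ideal.span {g ^ (p - 1)}) = A)
    (hB : (frobPow B p).colon (Ideal.span {f ^ (p - 1)}) = B) :
    (Ideal.span {f ^ p} * frobPow A p + Ideal.span {g ^ p} * frobPow B p).colon
        (Ideal.span {f ^ (p - 1) * g ^ (p - 1)}) =
      Ideal.span {f} * A + Ideal.span {g} * B := by
  have h := Ideal.colon_span_pow_mul_add_eq hfg (frobPow A p) (frobPow B p) (p - 1)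
  rwa [Nat.sub_add_cancel (Fact.out : p.Prime).one_le, hA, hB] at h

/-- In a UFD of characteristic `p`, for relatively prime `f, g` and ideals `A, B` with
`(A^{[p]} : g^{p−1}) = A` and `(B^{[p]} : f^{p−1}) = B`, one has
`(f^p A^{[p]} + g^p B^{[p]} : f^{p−1} g^{p−1}) = fA + gB`. -/
theorem stmt14 {R : Type*} [CommRing R] [IsDomain R] [UniqueFactorizationMonoid R]
    (p : ℕ) [Fact p.Prime] [CharP R p]
    (f g : R) (hfg : IsRelPrime f g) (A B : Ideal R)
    (hA : (frobPow A p).colon (Ideal.span {g ^ (p - 1)}) = A)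
    (hB : (frobPow B p).colon (Ideal.span {f ^ (p - 1)}) = B) :
    (Ideal.span {f ^ p} * frobPow A p + Ideal.span {g ^ p} * frobPow B p).colon
        (Ideal.span {f ^ (p - 1) * g ^ (p - 1)}) =
      Ideal.span {f} * A + Ideal.span {g} * B :=
  stmt14_general p f g hfg A B hA hB
end

section
/- Let R = K[x,y,z] with K an F-finite field of characteristic p > 3, f = x³ + y³ + z³, and m = (x,y,z). Then (m^{[p]} : f^{p−1}) = m if p ≡ 1 mod 3, and (m^{[p]} : f^{p−1}) = R if p ≡ 2 mod 3. -/
theorem frobPow_span_range {R ι : Type*} [CommRing R] (p : ℕ) [ExpChar R p] (v : ι → R) :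
    frobPow (Ideal.span (Set.range v)) p = Ideal.span (Set.range fun i => v i ^ p) := by
  change Ideal.map (frobenius R p) _ = _
  rw [Ideal.map_span, ← Set.range_comp]
  rfl

namespace Finsupp

variable {σ : Type*}

theorem multinomial_dvd_factorial_degree (k : σ →₀ ℕ) :
    k.multinomial ∣ k.degree.factorial :=
  Dvd.intro_left _ (Nat.multinomial_spec _ _)

theorem multinomial_cast_ne_zero {K : Type*} [AddMonoidWithOne K] {p : ℕ} [CharP K p]
    (hp : p.Prime) (k : σ →₀ ℕ) (hk : k.degree < p) : (k.multinomial : K) ≠ 0 := by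
  rw [Ne, CharP.cast_eq_zero_iff K p]
  exact fun h => hk.not_ge <| hp.dvd_factorial.mp <| h.trans k.multinomial_dvd_factorial_degree

variable [Fintype σ]

theorem degree_le_card_mul_of_forall_lt {d : σ →₀ ℕ} {n : ℕ} (h : ∀ i, d i < n) :
    d.degree ≤ Fintype.card σ * (n - 1) := by
  rw [degree_eq_sum]
  calc ∑ i, d i ≤ ∑ _ : σ, (n - 1) := Finset.sum_le_sum fun i _ => Nat.le_sub_one_of_lt (h i)
    _ = Fintype.card σ * (n - 1) := by simp

theorem eq_of_forall_lt_of_degree_eq {d : σ →₀ ℕ} {n : ℕ} (h : ∀ i, d i < n)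
    (hd : d.degree = Fintype.card σ * (n - 1)) (i : σ) : d i = n - 1 := by
  have hle : ∀ i ∈ Finset.univ, d i ≤ n - 1 := fun i _ => Nat.le_sub_one_of_lt (h i)
  refine (Finset.sum_eq_sum_iff_of_le hle).mp ?_ i (Finset.mem_univ i)
  simp [← degree_eq_sum, hd]

end Finsupp

namespace MvPolynomial

variable {σ R : Type*} [CommSemiring R]

theorem mem_span_range_X_pow_iff {g : MvPolynomial σ R} {n : ℕ} :
    g ∈ Ideal.span (Set.range fun i => (X i : MvPolynomial σ R) ^ n) ↔
      ∀ d ∈ g.support, ∃ i, n ≤ d i := by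
  have : Set.range (fun i => (X i : MvPolynomial σ R) ^ n) =
      (fun s => monomial s (1 : R)) '' Set.range fun i => Finsupp.single i n := by
    rw [← Set.range_comp]
    simp [Function.comp_def, X_pow_eq_monomial]
  simp [this, mem_ideal_span_monomial_image, Finsupp.single_le_iff]

theorem span_range_X_eq_ker_constantCoeff :
    Ideal.span (Set.range X) = RingHom.ker (constantCoeff : MvPolynomial σ R →+* R) := by
  ext g
  rw [← Set.image_univ, mem_ideal_span_X_image, RingHom.mem_ker, constantCoeff_eq]
  constructor
  · intro h
    by_contra h0
    obtain ⟨i, -, hi⟩ := h 0 (mem_support_iff.mpr h0)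
    exact hi rfl
  · intro h d hd
    by_contra! hd0
    exact mem_support_iff.mp hd (by rwa [show d = 0 from Finsupp.ext fun i => hd0 i trivial])

theorem isMaximal_span_range_X {K : Type*} [Field K] :
    (Ideal.span (Set.range X) : Ideal (MvPolynomial σ K)).IsMaximal := by
  rw [span_range_X_eq_ker_constantCoeff]
  exact RingHom.ker_isMaximal_of_surjective _ fun k => ⟨C k, constantCoeff_C σ k⟩

variable [Fintype σ]

theorem sum_X_pow_eq_expand (q : ℕ) :
    (∑ i, X i ^ q : MvPolynomial σ R) = expand q (∑ i, X i) := by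
  simp

theorem exists_eq_smul_of_mem_support_sum_X_pow_pow {q n : ℕ} {d : σ →₀ ℕ}
    (hd : d ∈ ((∑ i, X i ^ q : MvPolynomial σ R) ^ n).support) :
    ∃ k : σ →₀ ℕ, d = q • k ∧ k.degree = n := by
  classical
  rw [sum_X_pow_eq_expand, ← map_pow] at hd
  obtain ⟨k, hk, rfl⟩ := Finset.mem_image.mp (support_expand_subset _ hd)
  rw [mem_support_iff, coeff_sum_X_pow_of_fintype] at hk
  refine ⟨k, rfl, by_contra fun h => hk ?_⟩
  rw [if_neg (show ¬(k.sum fun _ m => m) = n from h), Nat.cast_zero]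

theorem coeff_smul_sum_X_pow_pow {q : ℕ} (hq : q ≠ 0) (n : ℕ) (k : σ →₀ ℕ) :
    coeff (q • k) ((∑ i, X i ^ q : MvPolynomial σ R) ^ n) =
      if k.degree = n then (k.multinomial : R) else 0 := by
  rw [sum_X_pow_eq_expand, ← map_pow, coeff_expand_smul _ hq, coeff_sum_X_pow_of_fintype,
    Nat.cast_ite, Nat.cast_zero]
  rfl

theorem X_mul_sum_X_pow_card_pow_mem_span_X_pow (p : ℕ) (j : σ) :
    X j * (∑ i, X i ^ Fintype.card σ : MvPolynomial σ R) ^ (p - 1) ∈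
      Ideal.span (Set.range fun i => X i ^ p) := by
  rw [mem_span_range_X_pow_iff]
  intro d hd
  rw [support_X_mul, Finset.mem_map] at hd
  obtain ⟨e, he, rfl⟩ := hd
  obtain ⟨k, rfl, hk⟩ := exists_eq_smul_of_mem_support_sum_X_pow_pow he
  by_contra! h
  have := Finsupp.degree_le_card_mul_of_forall_lt h
  rw [addLeftEmbedding_apply, map_add, map_nsmul, Finsupp.degree_single, hk, smul_eq_mul] at this
  omega

theorem sum_X_pow_card_pow_mem_span_X_pow [Nonempty σ] {p : ℕ}
    (hp : ¬Fintype.card σ ∣ p - 1) :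
    (∑ i, X i ^ Fintype.card σ : MvPolynomial σ R) ^ (p - 1) ∈
      Ideal.span (Set.range fun i => X i ^ p) := by
  rw [mem_span_range_X_pow_iff]
  intro d hd
  obtain ⟨k, rfl, hk⟩ := exists_eq_smul_of_mem_support_sum_X_pow_pow hd
  by_contra! h
  have hdeg := Finsupp.eq_of_forall_lt_of_degree_eq h (by rw [map_nsmul, hk, smul_eq_mul])
    (Classical.arbitrary σ)
  exact hp ⟨_, hdeg.symm⟩

theorem sum_X_pow_card_pow_notMem_span_X_pow [Nonempty σ] {K : Type*} [Field K] {p : ℕ}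
    [CharP K p] (hp : p.Prime) (hdvd : Fintype.card σ ∣ p - 1) :
    (∑ i, X i ^ Fintype.card σ : MvPolynomial σ K) ^ (p - 1) ∉
      Ideal.span (Set.range fun i => X i ^ p) := by
  obtain ⟨t, ht⟩ := hdvd
  have hlt : p - 1 < p := Nat.sub_lt hp.pos one_pos
  set k : σ →₀ ℕ := Finsupp.equivFunOnFinite.symm fun _ => t
  have hk : k.degree = p - 1 := by simp [k, Finsupp.degree_eq_sum, ht]
  rw [mem_span_range_X_pow_iff]
  push Not
  refine ⟨Fintype.card σ • k, ?_, fun i => ?_⟩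
  · rw [mem_support_iff, coeff_smul_sum_X_pow_pow Fintype.card_ne_zero, if_pos hk]
    exact k.multinomial_cast_ne_zero hp (hk ▸ hlt)
  · calc (Fintype.card σ • k) i = p - 1 := by simp [k, ht]
      _ < p := hlt

end MvPolynomial

open MvPolynomial in
theorem stmt19_general {K : Type*} [Field K]
    (p : ℕ) [Fact p.Prime] [CharP K p] :
    let R := MvPolynomial (Fin 3) K
    let f : R := X 0 ^ 3 + X 1 ^ 3 + X 2 ^ 3
    let m : Ideal R := Ideal.span {X 0, X 1, X 2}
    (p % 3 = 1 → (frobPow m p).colon (Ideal.span {f ^ (p - 1)}) = m) ∧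
    (p % 3 = 2 → (frobPow m p).colon (Ideal.span {f ^ (p - 1)}) = ⊤) := by
  intro R f m
  have hf : f = ∑ i, X i ^ Fintype.card (Fin 3) := by rw [Fintype.card_fin, Fin.sum_univ_three]
  have hm : m = Ideal.span (Set.range X) := by
    show Ideal.span _ = _
    congr 1
    ext
    simp [Fin.exists_fin_succ, eq_comm]
  rw [hf, hm, frobPow_span_range, Submodule.colon_span]
  have hle : Ideal.span (Set.range X) ≤ (Ideal.span (Set.range fun i => X i ^ p)).colon
      {(∑ i, X i ^ Fintype.card (Fin 3) : MvPolynomial (Fin 3) K) ^ (p - 1)} := by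
    rw [Ideal.span_le]
    rintro _ ⟨j, rfl⟩
    exact Submodule.mem_colon_singleton.mpr (X_mul_sum_X_pow_card_pow_mem_span_X_pow p j)
  refine ⟨fun hp1 => (isMaximal_span_range_X.eq_of_le ?_ hle).symm, fun hp2 => ?_⟩
  · rw [Ne, Submodule.colon_eq_top_iff_subset, Set.singleton_subset_iff]
    exact sum_X_pow_card_pow_notMem_span_X_pow Fact.out (by rw [Fintype.card_fin]; omega)
  · rw [Submodule.colon_eq_top_iff_subset, Set.singleton_subset_iff]
    exact sum_X_pow_card_pow_mem_span_X_pow (by rw [Fintype.card_fin]; omega)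

open MvPolynomial in
/-- For `R = K[x,y,z]` with `K` an `F`-finite field of characteristic `p > 3`,
`f = x³ + y³ + z³` and `m = (x,y,z)`: `(m^{[p]} : f^{p−1}) = m` if `p ≡ 1 mod 3`,
and `(m^{[p]} : f^{p−1}) = R` if `p ≡ 2 mod 3`. -/
theorem stmt19 {K : Type*} [Field K]
    (p : ℕ) [Fact p.Prime] [CharP K p] [ExpChar K p] (hp3 : 3 < p)
    (hFfin : @Module.Finite K K _ _ (Module.compHom K (frobenius K p))) :
    let R := MvPolynomial (Fin 3) K
    let f : R := X 0 ^ 3 + X 1 ^ 3 + X 2 ^ 3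
    let m : Ideal R := Ideal.span {X 0, X 1, X 2}
    (p % 3 = 1 → (frobPow m p).colon (Ideal.span {f ^ (p - 1)}) = m) ∧
    (p % 3 = 2 → (frobPow m p).colon (Ideal.span {f ^ (p - 1)}) = ⊤) :=
  stmt19_general p
end
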